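/- For 1 <= s <= t with s+t >= 3, there exist distinct vertex sets F_1, F_2 in LeTQ(s,t) with |F_1| = s+1, |F_2| = s+2, which are indistinguishable under the MM* model; consequently the diagnosability of LeTQ(s,t) under the MM* model is at most s+1. -/

import Mathlib

/-!
Take `F` to contain the neighbourhood of a vertex `v`. Then `F` and `F ∪ {v}` differ only in `v`,
so no comparison can tell them apart: the only test involving `v` is run by a neighbour of `v`,
which is faulty in both scenarios. At the origin of `LeTQ(s,t)` (bit `c = 0`, bit `a₀ = 0`) the
neighbours are the `c`-partner and the `s` single flips of the `a`-bits, which gives sets of sizes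
`s + 1` and `s + 2`.
-/

/-- Flip bit `k` of the binary string `x`. -/
def bflip {n : ℕ} (x : Fin n → Bool) (k : Fin n) : Fin n → Bool :=
  Function.update x k (!(x k))

/-- Locally twisted cube adjacency on `n`-bit binary strings:
either flip bit `k` for some `k ≤ 1`; or, for some `k ≥ 2`, flip bits `k` and `k-1`
when bit 0 is `1`, resp. flip only bit `k` when bit 0 is `0`. -/
def cubeAdj (n : ℕ) (x y : Fin n → Bool) : Prop :=
  (∃ k : Fin n, (k : ℕ) ≤ 1 ∧ y = bflip x k) ∨
  (∃ k : Fin n, 2 ≤ (k : ℕ) ∧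
    ((∃ h0 : 0 < n, x ⟨0, h0⟩ = true ∧
        y = bflip (bflip x k) ⟨(k : ℕ) - 1, lt_of_le_of_lt (Nat.sub_le _ _) k.isLt⟩) ∨
     (∃ h0 : 0 < n, x ⟨0, h0⟩ = false ∧ y = bflip x k)))

/-- The locally twisted cube `LTQ_n`. -/
def LTQ (n : ℕ) : SimpleGraph (Fin n → Bool) where
  Adj x y := x ≠ y ∧ (cubeAdj n x y ∨ cubeAdj n y x)
  symm := ⟨fun _ _ h => ⟨h.1.symm, h.2.symm⟩⟩
  loopless := ⟨fun _ h => h.1 rfl⟩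

/-- A vertex of `LeTQ(s,t)`: the `a`-bits, the `b`-bits and the bit `c`. -/
abbrev LeTQVert (s t : ℕ) := (Fin s → Bool) × (Fin t → Bool) × Bool

/-- One-sided adjacency condition of the locally exchanged twisted cube. -/
def LeTQAdjOne (s t : ℕ) (u v : LeTQVert s t) : Prop :=
  (u.1 = v.1 ∧ u.2.1 = v.2.1 ∧ u.2.2 = !v.2.2) ∨
  (u.2.2 = true ∧ v.2.2 = true ∧ u.1 = v.1 ∧ cubeAdj t u.2.1 v.2.1) ∨
  (u.2.2 = false ∧ v.2.2 = false ∧ u.2.1 = v.2.1 ∧ cubeAdj s u.1 v.1)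

/-- The locally exchanged twisted cube `LeTQ(s,t)`. -/
def LeTQ (s t : ℕ) : SimpleGraph (LeTQVert s t) where
  Adj u v := u ≠ v ∧ (LeTQAdjOne s t u v ∨ LeTQAdjOne s t v u)
  symm := ⟨fun _ _ h => ⟨h.1.symm, h.2.symm⟩⟩
  loopless := ⟨fun _ h => h.1 rfl⟩

/-- Distinguishability of two faulty sets under the MM* model. -/
def mmDistinguishable {V : Type*} (G : SimpleGraph V) (F1 F2 : Set V) : Prop :=
  (∃ u w v, u ∉ F1 ∪ F2 ∧ w ∉ F1 ∪ F2 ∧ v ∈ symmDiff F1 F2 ∧ G.Adj u w ∧ G.Adj v w) ∨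
  (∃ u v w, u ∈ F1 \ F2 ∧ v ∈ F1 \ F2 ∧ u ≠ v ∧ w ∉ F1 ∪ F2 ∧ G.Adj u w ∧ G.Adj v w) ∨
  (∃ u v w, u ∈ F2 \ F1 ∧ v ∈ F2 \ F1 ∧ u ≠ v ∧ w ∉ F1 ∪ F2 ∧ G.Adj u w ∧ G.Adj v w)

theorem not_mmDistinguishable_insert_of_neighborSet_subset {V : Type*} (G : SimpleGraph V)
    {v : V} {F : Set V} (hF : G.neighborSet v ⊆ F) :
    ¬ mmDistinguishable G F (insert v F) := by
  have mem_diff : ∀ {x}, x ∈ insert v F \ F → x = v := fun hx =>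
    hx.1.resolve_right hx.2
  rintro (⟨-, w, x, -, hw, hx, -, hxw⟩ | ⟨u, -, -, hu, -⟩ | ⟨u, x, -, hu, hx, hux, -⟩)
  · have hxv : x = v := by
      rcases Set.mem_symmDiff.1 hx with ⟨hxF, hxv⟩ | h
      · exact absurd (Set.mem_insert_of_mem v hxF) hxv
      · exact mem_diff h
    subst hxv
    exact hw (Or.inl (hF hxw))
  · exact hu.2 (Set.mem_insert_of_mem v hu.1)
  · exact hux ((mem_diff hu).trans (mem_diff hx).symm)

section bflip

variable {n : ℕ}

@[simp]
theorem bflip_apply_self (x : Fin n → Bool) (k : Fin n) : bflip x k k = !x k := by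
  simp [bflip]

theorem bflip_apply_of_ne (x : Fin n → Bool) {j k : Fin n} (h : j ≠ k) : bflip x k j = x j := by
  simp [bflip, h]

@[simp]
theorem bflip_bflip (x : Fin n → Bool) (k : Fin n) : bflip (bflip x k) k = x := by
  funext j
  by_cases h : j = k <;> simp [bflip, h]

theorem bflip_injective (x : Fin n → Bool) : Function.Injective (bflip x) := by
  intro j k h
  by_contra hjk
  simpa [bflip_apply_of_ne x hjk] using congrFun h j

theorem ne_bflip (x : Fin n → Bool) (k : Fin n) : x ≠ bflip x k := fun h => by
  simpa using congrFun h k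

theorem exists_eq_bflip_of_cubeAdj {x y : Fin n → Bool} (hx : ∀ h : 0 < n, x ⟨0, h⟩ = false)
    (h : cubeAdj n x y ∨ cubeAdj n y x) : ∃ k, y = bflip x k := by
  rcases h with (⟨k, -, rfl⟩ | ⟨k, -, ⟨h0, hx0, -⟩ | ⟨-, -, rfl⟩⟩) |
    (⟨k, -, rfl⟩ | ⟨k, hk, ⟨h0, hy0, rfl⟩ | ⟨-, -, rfl⟩⟩)
  · exact ⟨k, rfl⟩
  · exact Bool.noConfusion ((hx h0).symm.trans hx0)
  · exact ⟨k, rfl⟩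
  · exact ⟨k, (bflip_bflip y k).symm⟩
  · -- flipping bits `k` and `k - 1`, both at least `1`, leaves bit `0` of `y` set
    have hx0 := hx h0
    rw [bflip_apply_of_ne _ (Fin.ne_of_val_ne (by simp; omega)),
      bflip_apply_of_ne _ (Fin.ne_of_val_ne (by simp; omega)), hy0] at hx0
    exact Bool.noConfusion hx0
  · exact ⟨k, (bflip_bflip y k).symm⟩

end bflip

namespace LeTQ

variable {s t : ℕ}

def cFlip (v : LeTQVert s t) : LeTQVert s t := (v.1, v.2.1, !v.2.2)

def aFlip (v : LeTQVert s t) (k : Fin s) : LeTQVert s t := (bflip v.1 k, v.2.1, v.2.2)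

theorem aFlip_injective (v : LeTQVert s t) : Function.Injective (aFlip v) := fun _ _ h =>
  bflip_injective v.1 (congrArg Prod.fst h)

theorem cFlip_notMem_range_aFlip (v : LeTQVert s t) : cFlip v ∉ Set.range (aFlip v) := by
  rintro ⟨k, hk⟩
  simpa [cFlip, aFlip] using congrArg (·.2.2) hk

theorem notMem_insert_cFlip_range_aFlip (v : LeTQVert s t) :
    v ∉ insert (cFlip v) (Set.range (aFlip v)) := by
  rintro (h | ⟨k, hk⟩)
  · simpa [cFlip] using congrArg (·.2.2) h
  · exact ne_bflip v.1 k (congrArg Prod.fst hk).symm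

theorem ncard_insert_cFlip_range_aFlip (v : LeTQVert s t) :
    (insert (cFlip v) (Set.range (aFlip v))).ncard = s + 1 := by
  rw [Set.ncard_insert_of_notMem (cFlip_notMem_range_aFlip v) (Set.finite_range _),
    ← Set.image_univ, Set.ncard_image_of_injective _ (aFlip_injective v), Set.ncard_univ,
    Nat.card_eq_fintype_card, Fintype.card_fin]

theorem neighborSet_subset {v : LeTQVert s t} (hc : v.2.2 = false)
    (ha : ∀ h : 0 < s, v.1 ⟨0, h⟩ = false) :
    (LeTQ s t).neighborSet v ⊆ insert (cFlip v) (Set.range (aFlip v)) := by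
  obtain ⟨a, b, c⟩ := v
  rintro ⟨a', b', c'⟩ ⟨-, h⟩
  simp only at hc ha
  subst hc
  rcases h with (⟨rfl, rfl, hc'⟩ | ⟨h, -⟩ | ⟨-, rfl, rfl, hadj⟩) |
    (⟨rfl, rfl, hc'⟩ | ⟨-, h, -⟩ | ⟨rfl, -, rfl, hadj⟩)
  · obtain rfl : c' = true := by simpa using hc'
    exact Or.inl rfl
  · exact Bool.noConfusion h
  · obtain ⟨k, rfl⟩ := exists_eq_bflip_of_cubeAdj ha (Or.inl hadj)
    exact Or.inr ⟨k, rfl⟩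
  · obtain rfl : c' = true := by simpa using hc'
    exact Or.inl rfl
  · exact Bool.noConfusion h
  · obtain ⟨k, rfl⟩ := exists_eq_bflip_of_cubeAdj ha (Or.inr hadj)
    exact Or.inr ⟨k, rfl⟩

end LeTQ

theorem stmt17_general (s t : ℕ) :
    (∃ F1 F2 : Set (LeTQVert s t), F1 ≠ F2 ∧ F1.ncard = s + 1 ∧ F2.ncard = s + 2 ∧
      ¬ mmDistinguishable (LeTQ s t) F1 F2) ∧
    ¬ (∀ F1 F2 : Set (LeTQVert s t), F1 ≠ F2 → F1.ncard ≤ s + 2 → F2.ncard ≤ s + 2 →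
        mmDistinguishable (LeTQ s t) F1 F2) := by
  open LeTQ in
  let v : LeTQVert s t := (fun _ => false, fun _ => false, false)
  let F := insert (cFlip v) (Set.range (aFlip v))
  have hv : v ∉ F := notMem_insert_cFlip_range_aFlip v
  have hne : F ≠ insert v F := fun h => hv (h ▸ Set.mem_insert v F)
  have hF : F.ncard = s + 1 := ncard_insert_cFlip_range_aFlip v
  have hF' : (insert v F).ncard = s + 2 := by
    rw [Set.ncard_insert_of_notMem hv (Set.toFinite F), hF]
  have hindist : ¬ mmDistinguishable (LeTQ s t) F (insert v F) :=
    not_mmDistinguishable_insert_of_neighborSet_subset _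
      (neighborSet_subset rfl fun _ => rfl)
  exact ⟨⟨F, insert v F, hne, hF, hF', hindist⟩,
    fun H => hindist (H F _ hne (by omega) hF'.le)⟩

/-- There is an indistinguishable pair of sizes s+1 and s+2 under MM*, hence the
diagnosability of LeTQ(s,t) under MM* is at most s+1. -/
theorem stmt17 (s t : ℕ) (hs : 1 ≤ s) (hst : s ≤ t) (h3 : 3 ≤ s + t) :
    (∃ F1 F2 : Set (LeTQVert s t), F1 ≠ F2 ∧ F1.ncard = s + 1 ∧ F2.ncard = s + 2 ∧
      ¬ mmDistinguishable (LeTQ s t) F1 F2) ∧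
    ¬ (∀ F1 F2 : Set (LeTQVert s t), F1 ≠ F2 → F1.ncard ≤ s + 2 → F2.ncard ≤ s + 2 →
        mmDistinguishable (LeTQ s t) F1 F2) :=
  stmt17_general s t
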